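/- arXiv:2101.05780 — 4 statements merged into one kernel-verified Lean document; each statement's English description precedes it below -/
import Mathlib

section
/- Let X be a real random variable with E[X]=0, E[X^2]=σ^2, and E[|X|^3] finite, and let f be its characteristic function. Then for all real t, |f(t) - exp(-σ^2 t^2 / 2)| ≤ E[|X|^3] * |t|^3 / 6. -/
/-!
Write `F` for the characteristic function and `V = σ²`. Since `F' s = i E[X e^{isX}]`, the
quantity `F' s + V s F s` is `i` times the Stein discrepancy `E[X ψ(X)] - V E[ψ'(X)]` of
`ψ = e^{is·}`. Symmetrising with an independent copy `Y` of `X` (and using `E X = 0`),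
`2 (E[X ψ(X)] - V E[ψ'(X)]) = E[(Y - X) (ψ Y - ψ X + X ψ' Y - Y ψ' X)]`, and Taylor's formula
bounds the bracket by `s²/2 · |Y|Y| - X|X||`. As `E[(Y - X)(Y|Y| - X|X|)] = 2 E|X|³`, this gives
`‖F' s + V s F s‖ ≤ E|X|³ s² / 2`. Multiplying by the integrating factor `e^{V s²/2}` and
integrating from `0` to `t` yields the bound `E|X|³ |t|³ / 6`.
-/

open MeasureTheory Complex

noncomputable def charFun (μ : Measure ℝ) (t : ℝ) : ℂ :=
  ∫ x, Complex.exp (t * x * Complex.I) ∂μ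

theorem MeasureTheory.Integrable.of_norm_le_mul_abs_pow {E : Type*} [NormedAddCommGroup E]
    {μ : Measure ℝ} [IsFiniteMeasure μ] {n k : ℕ} {h : ℝ → E} {C : ℝ}
    (hint : Integrable (fun x => |x| ^ n) μ) (hk : k ≤ n) (hh : Continuous h)
    (hb : ∀ x, ‖h x‖ ≤ C * |x| ^ k) : Integrable h μ :=
  ((integrable_norm_pow_of_le aestronglyMeasurable_id hk (by simpa using hint)).const_mul C).mono'
    hh.aestronglyMeasurable (ae_of_all _ hb)

theorem memLp_id_one_of_integrable_abs_pow {μ : Measure ℝ} [IsFiniteMeasure μ] {n : ℕ}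
    (hn : 1 ≤ n) (hint : Integrable (fun x => |x| ^ n) μ) : MemLp id 1 μ :=
  memLp_one_iff_integrable.2 <|
    hint.of_norm_le_mul_abs_pow (C := 1) hn continuous_id fun x => by simp

theorem integrable_ofReal_pow_mul {μ : Measure ℝ} [IsFiniteMeasure μ] {n k : ℕ} {φ : ℝ → ℂ}
    {B : ℝ} (hint : Integrable (fun x => |x| ^ n) μ) (hk : k ≤ n) (hφ : Continuous φ)
    (hB : ∀ x, ‖φ x‖ ≤ B) : Integrable (fun x : ℝ => (x : ℂ) ^ k * φ x) μ :=
  hint.of_norm_le_mul_abs_pow hk (by fun_prop) fun x => by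
    rw [norm_mul, norm_pow, norm_real, Real.norm_eq_abs, mul_comm]
    exact mul_le_mul_of_nonneg_right (hB x) (by positivity)

theorem hasDerivAt_mul_abs (u : ℝ) : HasDerivAt (fun v : ℝ => v * |v|) (2 * |u|) u := by
  have hne : ∀ v : ℝ, v ≠ 0 → HasDerivAt (fun v : ℝ => v * |v|) (2 * |v|) v := fun v hv => by
    have h := (hasDerivAt_id' v).mul (hasDerivAt_abs hv)
    rwa [one_mul, self_mul_sign, ← two_mul] at h
  rcases eq_or_ne u 0 with rfl | hu
  · exact hasDerivAt_of_hasDerivAt_of_ne (g := fun v => 2 * |v|) hne (by fun_prop) (by fun_prop)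
  · exact hne u hu

theorem monotone_mul_abs : Monotone fun u : ℝ => u * |u| :=
  monotone_of_hasDerivAt_nonneg hasDerivAt_mul_abs fun u => by positivity

theorem integral_abs_eq (x y : ℝ) : ∫ u in x..y, |u| = (y * |y| - x * |x|) / 2 := by
  rw [intervalIntegral.integral_eq_sub_of_hasDerivAt
    (fun u _ => by simpa using (hasDerivAt_mul_abs u).div_const 2)
    (continuous_abs.intervalIntegrable x y)]
  ring

theorem norm_sub_add_smul_deriv_sub_smul_deriv_le {E : Type*} [NormedAddCommGroup E]
    [NormedSpace ℝ E] [CompleteSpace E] {ψ ψ' ψ'' : ℝ → E} {M : ℝ}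
    (hψ : ∀ u, HasDerivAt ψ (ψ' u) u) (hψ' : ∀ u, HasDerivAt ψ' (ψ'' u) u)
    (hψ'' : Continuous ψ'') (hM : ∀ u, ‖ψ'' u‖ ≤ M) (x y : ℝ) :
    ‖ψ y - ψ x + x • ψ' y - y • ψ' x‖ ≤ M / 2 * |y * |y| - (x * |x|)| := by
  have hΦ : ∀ u, HasDerivAt (fun v => (x + y - v) • ψ' v + ψ v) ((x + y - u) • ψ'' u) u := by
    intro u
    refine ((((hasDerivAt_id' u).const_sub (x + y)).smul (hψ' u)).add (hψ u)).congr_deriv ?_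
    simp only [neg_smul, one_smul]
    abel
  have hFTC := intervalIntegral.integral_eq_sub_of_hasDerivAt (fun u _ => hΦ u)
    (((continuous_const.sub continuous_id).smul hψ'').intervalIntegrable x y)
  have hM0 : 0 ≤ M := (norm_nonneg _).trans (hM 0)
  calc ‖ψ y - ψ x + x • ψ' y - y • ψ' x‖ = ‖∫ u in x..y, (x + y - u) • ψ'' u‖ := by
        rw [hFTC, add_sub_cancel_right, add_sub_cancel_left]
        congr 1
        abel
    _ ≤ |(∫ u in x..y, M * |x + y - u|)| := by
        refine intervalIntegral.norm_integral_le_abs_of_norm_le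
          (ae_of_all _ fun u => ?_)
          ((by fun_prop : Continuous fun u => M * |x + y - u|).intervalIntegrable x y)
        rw [norm_smul, Real.norm_eq_abs, mul_comm]
        gcongr
        exact hM u
    _ = M / 2 * |y * |y| - (x * |x|)| := by
        rw [intervalIntegral.integral_const_mul,
          intervalIntegral.integral_comp_sub_left (fun u => |u|), add_sub_cancel_right,
          add_sub_cancel_left, integral_abs_eq, abs_mul, abs_of_nonneg hM0, abs_div,
          abs_two]
        ring

theorem norm_sub_smul_sub_add_smul_deriv_sub_smul_deriv_le {E : Type*} [NormedAddCommGroup E]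
    [NormedSpace ℝ E] [CompleteSpace E] {ψ ψ' ψ'' : ℝ → E} {M : ℝ}
    (hψ : ∀ u, HasDerivAt ψ (ψ' u) u) (hψ' : ∀ u, HasDerivAt ψ' (ψ'' u) u)
    (hψ'' : Continuous ψ'') (hM : ∀ u, ‖ψ'' u‖ ≤ M) (x y : ℝ) :
    ‖(y - x) • (ψ y - ψ x + x • ψ' y - y • ψ' x)‖
      ≤ M / 2 * ((y - x) * (y * |y| - x * |x|)) := by
  have hmono : 0 ≤ (y - x) * (y * |y| - x * |x|) :=
    (monotone_id.monovary monotone_mul_abs).sub_mul_sub_nonneg x y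
  rw [norm_smul, Real.norm_eq_abs, ← abs_of_nonneg hmono, abs_mul, mul_left_comm]
  gcongr
  exact norm_sub_add_smul_deriv_sub_smul_deriv_le hψ hψ' hψ'' hM x y

section Covariance

variable {Ω 𝕜 : Type*} [MeasurableSpace Ω] {μ : Measure Ω} [RCLike 𝕜] {f g : Ω → 𝕜}

theorem integrable_prod_sub_mul_sub [IsFiniteMeasure μ] (hf : Integrable f μ)
    (hg : Integrable g μ) (hfg : Integrable (fun ω => f ω * g ω) μ) :
    Integrable (fun p : Ω × Ω => (f p.2 - f p.1) * (g p.2 - g p.1)) (μ.prod μ) := by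
  refine (((hfg.comp_snd μ).add (hfg.comp_fst μ)).sub ((hg.mul_prod hf).add
    (hf.mul_prod hg))).congr (ae_of_all _ fun p => ?_)
  simp only [Pi.add_apply, Pi.sub_apply]
  ring

theorem integral_prod_sub_mul_sub [IsProbabilityMeasure μ] (hf : Integrable f μ)
    (hg : Integrable g μ) (hfg : Integrable (fun ω => f ω * g ω) μ) :
    ∫ p, (f p.2 - f p.1) * (g p.2 - g p.1) ∂(μ.prod μ)
      = 2 * (∫ ω, f ω * g ω ∂μ - (∫ ω, f ω ∂μ) * ∫ ω, g ω ∂μ) := by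
  have hexpand : ∀ p : Ω × Ω, (f p.2 - f p.1) * (g p.2 - g p.1)
      = f p.2 * g p.2 + f p.1 * g p.1 - (g p.1 * f p.2 + f p.1 * g p.2) := fun p => by ring
  simp_rw [hexpand]
  rw [integral_sub, integral_add, integral_add, integral_fun_snd (fun ω => f ω * g ω),
    integral_fun_fst (fun ω => f ω * g ω), integral_prod_mul f g, integral_prod_mul g f]
  · simp only [probReal_univ, one_smul]
    ring
  exacts [hg.mul_prod hf, hf.mul_prod hg, hfg.comp_snd μ, hfg.comp_fst μ,
    (hfg.comp_snd μ).add (hfg.comp_fst μ), (hg.mul_prod hf).add (hf.mul_prod hg)]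

end Covariance

theorem integral_prod_sub_mul_eq_two_mul_integral_mul_sub {μ : Measure ℝ}
    [IsProbabilityMeasure μ] (hcent : ∫ x, x ∂μ = 0) (h2 : Integrable (fun x => |x| ^ 2) μ)
    {ψ φ : ℝ → ℂ} {A B : ℝ} (hψ : Continuous ψ) (hφ : Continuous φ) (hA : ∀ x, ‖ψ x‖ ≤ A)
    (hB : ∀ x, ‖φ x‖ ≤ B) :
    ∫ p, ((p.2 : ℂ) - p.1) * (ψ p.2 - ψ p.1 + p.1 * φ p.2 - p.2 * φ p.1) ∂(μ.prod μ)
      = 2 * (∫ x, x * ψ x ∂μ - (∫ x, x ^ 2 ∂μ : ℝ) * ∫ x, φ x ∂μ) := by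
  have hx : Integrable (fun x : ℝ => (x : ℂ)) μ := by
    simpa using integrable_ofReal_pow_mul h2 one_le_two continuous_const
      fun _ => norm_one.le
  have hx2 : Integrable (fun x : ℝ => (x : ℂ) ^ 2) μ := by
    simpa using integrable_ofReal_pow_mul h2 le_rfl continuous_const fun _ => norm_one.le
  have hψi : Integrable ψ μ := by simpa using integrable_ofReal_pow_mul h2 zero_le_two hψ hA
  have hφi : Integrable φ μ := by simpa using integrable_ofReal_pow_mul h2 zero_le_two hφ hB
  have hxψ : Integrable (fun x : ℝ => (x : ℂ) * ψ x) μ := by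
    simpa using integrable_ofReal_pow_mul h2 one_le_two hψ hA
  have hxφ : Integrable (fun x : ℝ => (x : ℂ) * φ x) μ := by
    simpa using integrable_ofReal_pow_mul h2 one_le_two hφ hB
  have hx2φ : Integrable (fun x : ℝ => (x : ℂ) ^ 2 * φ x) μ :=
    integrable_ofReal_pow_mul h2 le_rfl hφ hB
  have hxxφ : Integrable (fun x : ℝ => (x : ℂ) * ((x : ℂ) * φ x)) μ :=
    hx2φ.congr (ae_of_all _ fun x => by ring)
  have hmean : ∫ x, (x : ℂ) ∂μ = 0 := by rw [integral_complex_ofReal, hcent, ofReal_zero]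
  have hsq : ∫ x, (x : ℂ) ^ 2 ∂μ = (∫ x, x ^ 2 ∂μ : ℝ) := by
    rw [← integral_complex_ofReal]
    simp only [ofReal_pow]
  have hcube : ∫ x, (x : ℂ) * (x * φ x) ∂μ = ∫ x, (x : ℂ) ^ 2 * φ x ∂μ :=
    integral_congr_ae (ae_of_all _ fun x => by ring)
  have i1 : Integrable (fun p : ℝ × ℝ => ((p.2 : ℂ) - p.1) * (ψ p.2 - ψ p.1)) (μ.prod μ) :=
    integrable_prod_sub_mul_sub hx hψi hxψ
  have i2 : Integrable (fun p : ℝ × ℝ => ((p.2 : ℂ) - p.1) * (p.2 * φ p.2 - p.1 * φ p.1))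
      (μ.prod μ) :=
    integrable_prod_sub_mul_sub hx hxφ hxxφ
  have i3 : Integrable (fun p : ℝ × ℝ => ((p.2 : ℂ) ^ 2 - (p.1 : ℂ) ^ 2) * (φ p.2 - φ p.1))
      (μ.prod μ) :=
    integrable_prod_sub_mul_sub (f := fun x : ℝ => (x : ℂ) ^ 2) hx2 hφi hx2φ
  have hsplit : ∀ p : ℝ × ℝ,
      ((p.2 : ℂ) - p.1) * (ψ p.2 - ψ p.1 + p.1 * φ p.2 - p.2 * φ p.1)
        = ((p.2 : ℂ) - p.1) * (ψ p.2 - ψ p.1) - ((p.2 : ℂ) - p.1) * (p.2 * φ p.2 - p.1 * φ p.1)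
          + ((p.2 : ℂ) ^ 2 - (p.1 : ℂ) ^ 2) * (φ p.2 - φ p.1) := fun p => by ring
  simp_rw [hsplit]
  rw [integral_add, integral_sub i1 i2, integral_prod_sub_mul_sub hx hψi hxψ,
    integral_prod_sub_mul_sub hx hxφ hxxφ,
    integral_prod_sub_mul_sub (f := fun x : ℝ => (x : ℂ) ^ 2) hx2 hφi hx2φ, hmean, hsq, hcube]
  · ring
  exacts [i1.sub i2, i3]

theorem norm_integral_mul_sub_integral_sq_mul_integral_deriv_le {μ : Measure ℝ}
    [IsProbabilityMeasure μ] (hcent : ∫ x, x ∂μ = 0) (hint : Integrable (fun x => |x| ^ 3) μ)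
    {ψ ψ' ψ'' : ℝ → ℂ} {A B M : ℝ} (hψ : ∀ x, HasDerivAt ψ (ψ' x) x)
    (hψ' : ∀ x, HasDerivAt ψ' (ψ'' x) x) (hψ'' : Continuous ψ'') (hA : ∀ x, ‖ψ x‖ ≤ A)
    (hB : ∀ x, ‖ψ' x‖ ≤ B) (hM : ∀ x, ‖ψ'' x‖ ≤ M) :
    ‖∫ x, x * ψ x ∂μ - (∫ x, x ^ 2 ∂μ : ℝ) * ∫ x, ψ' x ∂μ‖ ≤ M / 2 * ∫ x, |x| ^ 3 ∂μ := by
  have hidentity := integral_prod_sub_mul_eq_two_mul_integral_mul_sub hcent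
    (integrable_norm_pow_of_le aestronglyMeasurable_id (by norm_num : 2 ≤ 3) (by simpa using hint))
    (continuous_iff_continuousAt.2 fun x => (hψ x).continuousAt)
    (continuous_iff_continuousAt.2 fun x => (hψ' x).continuousAt) hA hB
  have hbound : ∀ p : ℝ × ℝ,
      ‖((p.2 : ℂ) - p.1) * (ψ p.2 - ψ p.1 + p.1 * ψ' p.2 - p.2 * ψ' p.1)‖
        ≤ M / 2 * ((p.2 - p.1) * (p.2 * |p.2| - p.1 * |p.1|)) := fun p => by
    simpa only [real_smul, ofReal_sub] using
      norm_sub_smul_sub_add_smul_deriv_sub_smul_deriv_le hψ hψ' hψ'' hM p.1 p.2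
  have hx : Integrable (fun x : ℝ => x) μ :=
    hint.of_norm_le_mul_abs_pow (k := 1) (C := 1) (by norm_num) continuous_id fun x => by simp
  have hxabs : Integrable (fun x : ℝ => x * |x|) μ :=
    hint.of_norm_le_mul_abs_pow (k := 2) (C := 1) (by norm_num) (by fun_prop) fun x => by simp [sq]
  have habs_cube : ∀ x : ℝ, |x| ^ 3 = x * (x * |x|) := fun x => by
    rw [pow_succ, sq_abs, sq, mul_assoc]
  have hcube : Integrable (fun x : ℝ => x * (x * |x|)) μ := hint.congr (ae_of_all _ habs_cube)
  have hthird : ∫ p, (p.2 - p.1) * (p.2 * |p.2| - p.1 * |p.1|) ∂(μ.prod μ)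
      = 2 * ∫ x, |x| ^ 3 ∂μ := by
    rw [integral_prod_sub_mul_sub hx hxabs hcube, hcent, zero_mul, sub_zero]
    exact congrArg _ (integral_congr_ae (ae_of_all _ fun x => (habs_cube x).symm))
  have htwice : ‖(2 : ℂ) * (∫ x, x * ψ x ∂μ - (∫ x, x ^ 2 ∂μ : ℝ) * ∫ x, ψ' x ∂μ)‖
      ≤ M / 2 * (2 * ∫ x, |x| ^ 3 ∂μ) := by
    rw [← hidentity, ← hthird, ← integral_const_mul]
    exact norm_integral_le_of_norm_le
      ((integrable_prod_sub_mul_sub hx hxabs hcube).const_mul _) (ae_of_all _ hbound)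
  rw [norm_mul, Complex.norm_two] at htwice
  linarith

theorem sub_exp_eq_integral_deriv_add_mul {F F' : ℝ → ℂ} {V : ℝ}
    (hF : ∀ s, HasDerivAt F (F' s) s) (hF' : Continuous F') (hF0 : F 0 = 1) (t : ℝ) :
    F t - exp (-(V * t ^ 2) / 2) = exp ((-(V * t ^ 2 / 2) : ℝ) : ℂ) *
      ∫ s in (0 : ℝ)..t, (F' s + V * s * F s) * exp ((V * s ^ 2 / 2 : ℝ) : ℂ) := by
  have hFc : Continuous F := continuous_iff_continuousAt.2 fun s => (hF s).continuousAt
  have hG : ∀ s, HasDerivAt (fun s => F s * exp ((V * s ^ 2 / 2 : ℝ) : ℂ))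
      ((F' s + V * s * F s) * exp ((V * s ^ 2 / 2 : ℝ) : ℂ)) s := by
    intro s
    have hq : HasDerivAt (fun s : ℝ => V * s ^ 2 / 2) (V * s) s :=
      (((hasDerivAt_pow 2 s).const_mul V).div_const 2).congr_deriv (by ring)
    refine ((hF s).mul hq.ofReal_comp.cexp).congr_deriv ?_
    push_cast
    ring
  rw [intervalIntegral.integral_eq_sub_of_hasDerivAt (fun s _ => hG s)
    ((by fun_prop : Continuous fun s : ℝ =>
      (F' s + V * s * F s) * exp ((V * s ^ 2 / 2 : ℝ) : ℂ)).intervalIntegrable 0 t), hF0,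
    mul_sub, mul_left_comm, ← exp_add, ← ofReal_add, neg_add_cancel]
  push_cast
  simp only [exp_zero, zero_pow two_ne_zero, mul_zero, zero_div]
  ring_nf

theorem norm_sub_exp_le_of_norm_deriv_add_mul_le {F F' : ℝ → ℂ} {V K : ℝ} (hV : 0 ≤ V)
    (hF : ∀ s, HasDerivAt F (F' s) s) (hF' : Continuous F') (hF0 : F 0 = 1)
    (hK : ∀ s, ‖F' s + V * s * F s‖ ≤ K * s ^ 2) (t : ℝ) :
    ‖F t - exp (-(V * t ^ 2) / 2)‖ ≤ K * |t| ^ 3 / 3 := by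
  have hK0 : 0 ≤ K := by simpa using (norm_nonneg _).trans (hK 1)
  have hbound : ‖∫ s in (0 : ℝ)..t, (F' s + V * s * F s) * exp ((V * s ^ 2 / 2 : ℝ) : ℂ)‖
      ≤ |∫ s in (0 : ℝ)..t, K * Real.exp (V * t ^ 2 / 2) * s ^ 2| := by
    refine intervalIntegral.norm_integral_le_abs_of_norm_le
      ((ae_restrict_iff' measurableSet_uIoc).2 (ae_of_all _ fun s hs => ?_))
      ((by fun_prop : Continuous fun s : ℝ =>
        K * Real.exp (V * t ^ 2 / 2) * s ^ 2).intervalIntegrable 0 t)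
    have hst : s ^ 2 ≤ t ^ 2 := by
      rcases Set.mem_uIoc.1 hs with ⟨h1, h2⟩ | ⟨h1, h2⟩ <;> nlinarith
    rw [norm_mul, norm_exp_ofReal]
    calc ‖F' s + V * s * F s‖ * Real.exp (V * s ^ 2 / 2)
        ≤ K * s ^ 2 * Real.exp (V * t ^ 2 / 2) := by gcongr; exact hK s
      _ = K * Real.exp (V * t ^ 2 / 2) * s ^ 2 := by ring
  rw [sub_exp_eq_integral_deriv_add_mul hF hF' hF0, norm_mul, norm_exp_ofReal,
    ← le_div_iff₀' (Real.exp_pos _)]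
  refine hbound.trans_eq ?_
  rw [intervalIntegral.integral_const_mul, integral_pow, abs_mul, abs_of_nonneg (by positivity),
    Real.exp_neg, div_inv_eq_mul]
  norm_num [abs_div, abs_pow]
  ring

theorem charFun_eq_measureTheory_charFun (μ : Measure ℝ) :
    _root_.charFun μ = MeasureTheory.charFun μ :=
  funext fun t => (charFun_apply_real t).symm

theorem norm_deriv_charFun_add_mul_charFun_le {μ : Measure ℝ} [IsProbabilityMeasure μ]
    (hcent : ∫ x, x ∂μ = 0) (hint : Integrable (fun x => |x| ^ 3) μ) (s : ℝ) :
    ‖deriv (MeasureTheory.charFun μ) s + (∫ x, x ^ 2 ∂μ : ℝ) * s * MeasureTheory.charFun μ s‖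
      ≤ (∫ x, |x| ^ 3 ∂μ) / 2 * s ^ 2 := by
  have hψ : ∀ x : ℝ, HasDerivAt (fun x : ℝ => exp (s * x * I)) (s * I * exp (s * x * I)) x :=
    fun x => ((((hasDerivAt_id' x).ofReal_comp.const_mul (s : ℂ)).mul_const I).cexp).congr_deriv
      (by push_cast; ring)
  have hψ' : ∀ x : ℝ, HasDerivAt (fun x : ℝ => s * I * exp (s * x * I))
      (-(s : ℂ) ^ 2 * exp (s * x * I)) x :=
    fun x => ((hψ x).const_mul _).congr_deriv
      (by linear_combination ((s : ℂ) ^ 2 * exp (s * x * I)) * I_sq)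
  have hnorm : ∀ x : ℝ, ‖exp (s * x * I)‖ = 1 := fun x => by
    rw [← ofReal_mul, norm_exp_ofReal_mul_I]
  have hstein := norm_integral_mul_sub_integral_sq_mul_integral_deriv_le hcent hint hψ hψ'
    (by fun_prop) (A := 1) (B := |s|) (M := s ^ 2) (fun x => (hnorm x).le)
    (fun x => by simp [hnorm]) (fun x => by simp [hnorm])
  rw [← iteratedDeriv_one, iteratedDeriv_charFun (n := 1)
    (by exact_mod_cast memLp_id_one_of_integrable_abs_pow (by norm_num) hint), charFun_apply_real]
  rw [integral_const_mul] at hstein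
  calc _ = ‖I * (∫ x, x * exp (s * x * I) ∂μ
        - (∫ x, x ^ 2 ∂μ : ℝ) * (s * I * ∫ x, exp (s * x * I) ∂μ))‖ := by
        simp only [pow_one]
        congr 1
        linear_combination ((∫ x, x ^ 2 ∂μ : ℝ) * s * ∫ x, exp (s * x * I) ∂μ) * I_sq
    _ ≤ _ := by
        rw [norm_mul, norm_I, one_mul]
        linarith

/-- If `E[X] = 0`, `E[X²] = σ²` and `E[|X|³] < ∞`, then
`|f(t) - exp(-σ²t²/2)| ≤ E[|X|³] |t|³ / 6` for all `t`. -/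
theorem charFun_sub_gauss_le_third_moment
    (μ : Measure ℝ) [IsProbabilityMeasure μ] (σ : ℝ)
    (hcent : ∫ x, x ∂μ = 0)
    (hvar : ∫ x, x ^ 2 ∂μ = σ ^ 2)
    (hint : Integrable (fun x => |x| ^ 3) μ) :
    ∀ t : ℝ, ‖_root_.charFun μ t - Complex.exp (-(σ ^ 2 * t ^ 2) / 2)‖
      ≤ (∫ x, |x| ^ 3 ∂μ) * |t| ^ 3 / 6 := by
  intro t
  have hF : ContDiff ℝ 1 (MeasureTheory.charFun μ) := contDiff_charFun
    (by exact_mod_cast memLp_id_one_of_integrable_abs_pow (by norm_num) hint)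
  have hode := norm_sub_exp_le_of_norm_deriv_add_mul_le (integral_nonneg fun x => sq_nonneg x)
    (fun s => (hF.differentiable one_ne_zero s).hasDerivAt) (hF.continuous_deriv le_rfl)
    (by simp) (norm_deriv_charFun_add_mul_charFun_le hcent hint) t
  rw [hvar] at hode
  rw [charFun_eq_measureTheory_charFun]
  convert hode using 1
  · push_cast
    ring
  · ring
end

section
/- Let 0 ≤ l ≤ m, p ≥ 1, q > 0, T > 0, and Δ := (1 - 4χ_1 - sqrt(K/n))/2 for constants K > 0, n ≥ 1, with χ_1 := sup_{x>0} x^{-3}|cos(x)-1+x^2/2|. Suppose m ≤ q. If Δ ≠ 0, then using |Ψ(t)| ≤ 1.0253/(2π|t|), (1/T) ∫_l^m |Ψ(u/T)| u^p exp(-(u^2/2)(1 - (4χ_1/q)u - sqrt(K/n))) du ≤ (1.0253/(4π)) |Δ|^{-p/2} |γ(p/2, Δ m^2) - γ(p/2, Δ l^2)|, where γ(a,x) := ∫_0^x |v|^{a-1} e^{-v} dv is the (extended) lower incomplete Gamma function. -/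
open MeasureTheory Real Set intervalIntegral

/-! Since `u ≤ q` on `[l, m]`, the factor `(4χ₁/q)u` in the exponent may be replaced by `4χ₁ ≥ 0`,
and the kernel bound gives `T⁻¹|Ψ(u/T)| ≤ 1.0253/(2πu)`; together they dominate the integrand by
`(1.0253/2π) u^(p-1) e^(-Δu²)`. The substitution `v = Δu²` maps this majorant onto the integrand of
`γ(p/2, ·)` up to the factor `2Δ|Δ|^(p/2-1)`, whose sign is absorbed by the absolute value. -/

/-- Prawitz's kernel `Ψ(t) = ½(1-|t| + i[(1-|t|)cot(πt) + sign(t)/π])` for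
`0 < |t| ≤ 1`, and `0` otherwise. -/
noncomputable def Psi (t : ℝ) : ℂ :=
  if 0 < |t| ∧ |t| ≤ 1 then
    (1 / 2 : ℂ) * (1 - |t| + Complex.I *
      ((1 - |t|) * Real.cot (π * t) + Real.sign t / π))
  else 0

/-- `χ₁ := sup_{x>0} x⁻³ |cos x - 1 + x²/2|`. -/
noncomputable def chi1 : ℝ :=
  ⨆ x : {x : ℝ // 0 < x}, |Real.cos x - 1 + (x : ℝ) ^ 2 / 2| / (x : ℝ) ^ 3

/-- (Extended) lower incomplete Gamma function `γ(a,x) = ∫_0^x |v|^{a-1} e^{-v} dv`. -/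
noncomputable def lGamma (a x : ℝ) : ℝ := ∫ v in (0 : ℝ)..x, |v| ^ (a - 1) * Real.exp (-v)

lemma locallyIntegrable_abs_rpow {r : ℝ} (hr : -1 < r) :
    LocallyIntegrable (fun x : ℝ => |x| ^ r) :=
  locallyIntegrable_of_norm_le_rpow (C := 1) (α := -r) (by simp) (by simp; linarith)
    (Filter.Eventually.of_forall fun x => by simp [abs_rpow_of_nonneg (abs_nonneg x)])
    (continuous_abs.measurable.pow_const r).aestronglyMeasurable

lemma locallyIntegrable_lGamma_integrand {a : ℝ} (ha : 0 < a) :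
    LocallyIntegrable (fun v : ℝ => |v| ^ (a - 1) * exp (-v)) :=
  (locallyIntegrable_abs_rpow (by linarith)).mul_continuous (by fun_prop)

lemma lGamma_sub_lGamma {a : ℝ} (ha : 0 < a) (x y : ℝ) :
    lGamma a y - lGamma a x = ∫ v in x..y, |v| ^ (a - 1) * exp (-v) := by
  have h := locallyIntegrable_lGamma_integrand ha
  exact integral_interval_sub_left
    (h.integrableOn_isCompact isCompact_uIcc).intervalIntegrable
    (h.integrableOn_isCompact isCompact_uIcc).intervalIntegrable

lemma intervalIntegrable_rpow_mul_exp_neg_mul_sq {p : ℝ} (hp : 0 < p) (Δ a b : ℝ) :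
    IntervalIntegrable (fun u : ℝ => u ^ (p - 1) * exp (-(Δ * u ^ 2))) volume a b :=
  (intervalIntegrable_rpow' (by linarith)).mul_continuousOn (by fun_prop)

lemma abs_mul_sq_rpow_mul_self (Δ p : ℝ) {u : ℝ} (hu : 0 < u) :
    |Δ * u ^ 2| ^ (p / 2 - 1) * u = |Δ| ^ (p / 2 - 1) * u ^ (p - 1) := by
  rw [abs_mul, abs_of_pos (pow_pos hu 2), mul_rpow (abs_nonneg Δ) (by positivity),
    ← rpow_natCast, ← rpow_mul hu.le, mul_assoc, ← rpow_add_one hu.ne']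
  congr 2
  push_cast
  ring

lemma integral_rpow_mul_exp_neg_mul_sq {p Δ l m : ℝ} (hp : 0 < p) (hl : 0 ≤ l) (hlm : l ≤ m)
    (hΔ : Δ ≠ 0) :
    ∫ u in l..m, u ^ (p - 1) * exp (-(Δ * u ^ 2))
      = |Δ| ^ (-(p / 2)) / 2 * |lGamma (p / 2) (Δ * m ^ 2) - lGamma (p / 2) (Δ * l ^ 2)| := by
  set g : ℝ → ℝ := fun v => |v| ^ (p / 2 - 1) * exp (-v)
  set J := ∫ u in l..m, u ^ (p - 1) * exp (-(Δ * u ^ 2))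
  have hΔa : 0 < |Δ| := abs_pos.2 hΔ
  have hcongr : EqOn (fun u => g (Δ * u ^ 2) * (2 * Δ * u))
      (fun u => 2 * Δ * |Δ| ^ (p / 2 - 1) * (u ^ (p - 1) * exp (-(Δ * u ^ 2)))) (uIoc l m) := by
    intro u hu
    simp only [g]
    linear_combination (2 * Δ * exp (-(Δ * u ^ 2))) *
      abs_mul_sq_rpow_mul_self Δ p ((le_min hl (hl.trans hlm)).trans_lt hu.1)
  have hint : IntervalIntegrable (fun u => g (Δ * u ^ 2) * (2 * Δ * u)) volume l m :=
    (intervalIntegrable_congr hcongr).2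
      ((intervalIntegrable_rpow_mul_exp_neg_mul_sq hp Δ l m).const_mul _)
  have hg := locallyIntegrable_lGamma_integrand (half_pos hp)
  have hsubst : ∫ u in l..m, g (Δ * u ^ 2) * (2 * Δ * u)
      = lGamma (p / 2) (Δ * m ^ 2) - lGamma (p / 2) (Δ * l ^ 2) := by
    rw [lGamma_sub_lGamma (half_pos hp)]
    refine integral_comp_mul_deriv''' (f := fun u => Δ * u ^ 2) (by fun_prop) ?_ ?_
      (hg.integrableOn_isCompact (isCompact_uIcc.image (by fun_prop)))
      ((intervalIntegrable_iff').1 hint)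
    · intro u _
      exact ((hasDerivAt_pow 2 u).const_mul Δ).hasDerivWithinAt.congr_deriv (by ring)
    · rintro _ ⟨u, hu, rfl⟩
      have hu0 : 0 < u := (le_min hl (hl.trans hlm)).trans_lt hu.1
      have hv : Δ * u ^ 2 ≠ 0 := mul_ne_zero hΔ (pow_pos hu0 2).ne'
      exact ((continuous_abs.continuousAt.rpow_const (Or.inl (abs_ne_zero.2 hv))).mul
        (by fun_prop)).continuousWithinAt
  have hJ : 0 ≤ J := integral_nonneg hlm fun u hu => by
    have := hl.trans hu.1
    positivity
  have hdiff : lGamma (p / 2) (Δ * m ^ 2) - lGamma (p / 2) (Δ * l ^ 2)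
      = 2 * Δ * |Δ| ^ (p / 2 - 1) * J := by
    rw [← hsubst, ← intervalIntegral.integral_const_mul]
    exact integral_congr_ae (.of_forall hcongr)
  have habs : |2 * Δ * |Δ| ^ (p / 2 - 1) * J| = 2 * |Δ| ^ (p / 2) * J := by
    rw [abs_mul, abs_of_nonneg hJ, abs_mul, abs_of_nonneg (rpow_nonneg hΔa.le _), abs_mul,
      abs_two, mul_assoc 2 |Δ|, ← rpow_one_add' hΔa.le (by linarith)]
    ring_nf
  rw [hdiff, habs, rpow_neg hΔa.le]
  field_simp

lemma chi1_nonneg : 0 ≤ chi1 :=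
  Real.iSup_nonneg fun x => div_nonneg (abs_nonneg _) (pow_nonneg x.2.le 3)

lemma exp_neg_half_sq_mul_le {χ s q u : ℝ} (hχ : 0 ≤ χ) (hu : 0 ≤ u) (huq : u ≤ q) :
    exp (-(u ^ 2 / 2) * (1 - 4 * χ / q * u - s)) ≤ exp (-((1 - 4 * χ - s) / 2 * u ^ 2)) := by
  have h : 4 * χ / q * u ≤ 4 * χ := by
    rw [div_mul_eq_mul_div, mul_div_assoc]
    exact mul_le_of_le_one_right (by positivity) (div_le_one_of_le₀ huq (hu.trans huq))
  exact exp_le_exp.2 (by nlinarith [sq_nonneg u])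

lemma one_div_mul_mul_rpow_le {x c T u p : ℝ} (hT : 0 < T) (hu : 0 < u)
    (hx : x ≤ c / |u / T|) : 1 / T * (x * u ^ p) ≤ c * u ^ (p - 1) := by
  rw [abs_of_pos (div_pos hu hT)] at hx
  calc 1 / T * (x * u ^ p) ≤ 1 / T * (c / (u / T) * u ^ p) := by gcongr
    _ = c * u ^ (p - 1) := by rw [rpow_sub_one hu.ne']; field_simp

lemma one_div_mul_mul_rpow_mul_exp_le {x c T u p q χ s : ℝ} (hT : 0 < T) (hu : 0 < u)
    (huq : u ≤ q) (hχ : 0 ≤ χ) (hx₀ : 0 ≤ x) (hx : x ≤ c / (2 * π * |u / T|)) :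
    1 / T * (x * u ^ p * exp (-(u ^ 2 / 2) * (1 - 4 * χ / q * u - s)))
      ≤ c / (2 * π) * (u ^ (p - 1) * exp (-((1 - 4 * χ - s) / 2 * u ^ 2))) := by
  have hkernel : 1 / T * (x * u ^ p) ≤ c / (2 * π) * u ^ (p - 1) :=
    one_div_mul_mul_rpow_le hT hu (by rwa [← div_mul_eq_div_div])
  have hexp := exp_neg_half_sq_mul_le (s := s) hχ hu.le huq
  calc _ = 1 / T * (x * u ^ p) * exp (-(u ^ 2 / 2) * (1 - 4 * χ / q * u - s)) := by ring
    _ ≤ c / (2 * π) * u ^ (p - 1) * exp (-((1 - 4 * χ - s) / 2 * u ^ 2)) :=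
      mul_le_mul hkernel hexp (exp_pos _).le
        ((by positivity : 0 ≤ 1 / T * (x * u ^ p)).trans hkernel)
    _ = _ := by ring

theorem J2_bound_general (p l m q T K n Δ : ℝ)
    (hl : 0 ≤ l) (hlm : l ≤ m) (hmq : m ≤ q) (hp : 1 ≤ p) (hT : 0 < T)
    (hΔ : Δ = (1 - 4 * chi1 - Real.sqrt (K / n)) / 2) (hΔ0 : Δ ≠ 0)
    (hPsi : ∀ t : ℝ, t ≠ 0 → ‖Psi t‖ ≤ 1.0253 / (2 * π * |t|)) :
    (1 / T) * ∫ u in l..m, ‖Psi (u / T)‖ * u ^ p *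
        Real.exp (-(u ^ 2 / 2) * (1 - 4 * chi1 / q * u - Real.sqrt (K / n)))
      ≤ 1.0253 / (4 * π) * |Δ| ^ (-(p / 2)) *
          |lGamma (p / 2) (Δ * m ^ 2) - lGamma (p / 2) (Δ * l ^ 2)| := by
  set C : ℝ := 1.0253 / (2 * π)
  have hmajorant : IntegrableOn (fun u => C * (u ^ (p - 1) * exp (-(Δ * u ^ 2)))) (Ioc l m) :=
    (intervalIntegrable_iff_integrableOn_Ioc_of_le hlm).1
      ((intervalIntegrable_rpow_mul_exp_neg_mul_sq (by linarith) Δ l m).const_mul C)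
  rw [intervalIntegral.integral_of_le hlm, ← MeasureTheory.integral_const_mul]
  calc _ ≤ ∫ u in Ioc l m, C * (u ^ (p - 1) * exp (-(Δ * u ^ 2))) := by
        refine integral_mono_of_nonneg ?_ hmajorant ?_ <;>
          refine (ae_restrict_iff' measurableSet_Ioc).2 (.of_forall fun u hu => ?_)
        · have := hl.trans hu.1.le
          positivity
        · have hu₀ : 0 < u := hl.trans_lt hu.1
          rw [hΔ]
          exact one_div_mul_mul_rpow_mul_exp_le hT hu₀ (hu.2.trans hmq) chi1_nonneg
            (norm_nonneg _) (hPsi _ (div_pos hu₀ hT).ne')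
    _ = C * ∫ u in l..m, u ^ (p - 1) * exp (-(Δ * u ^ 2)) := by
        rw [MeasureTheory.integral_const_mul, intervalIntegral.integral_of_le hlm]
    _ = _ := by
        rw [integral_rpow_mul_exp_neg_mul_sq (by linarith) hl hlm hΔ0]
        ring

/-- With `Δ := (1 - 4χ₁ - √(K/n))/2 ≠ 0`, one has
`T⁻¹ ∫_l^m |Ψ(u/T)| uᵖ exp(-(u²/2)(1 - (4χ₁/q)u - √(K/n))) du
  ≤ (1.0253/(4π)) |Δ|^{-p/2} |γ(p/2, Δm²) - γ(p/2, Δl²)|`. -/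
theorem J2_bound (p l m q T K n Δ : ℝ)
    (hl : 0 ≤ l) (hlm : l ≤ m) (hmq : m ≤ q) (hp : 1 ≤ p) (hq : 0 < q) (hT : 0 < T)
    (hK : 0 < K) (hn : 1 ≤ n)
    (hΔ : Δ = (1 - 4 * chi1 - Real.sqrt (K / n)) / 2) (hΔ0 : Δ ≠ 0)
    (hPsi : ∀ t : ℝ, t ≠ 0 → ‖Psi t‖ ≤ 1.0253 / (2 * π * |t|)) :
    (1 / T) * ∫ u in l..m, ‖Psi (u / T)‖ * u ^ p *
        Real.exp (-(u ^ 2 / 2) * (1 - 4 * chi1 / q * u - Real.sqrt (K / n)))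
      ≤ 1.0253 / (4 * π) * |Δ| ^ (-(p / 2)) *
          |lGamma (p / 2) (Δ * m ^ 2) - lGamma (p / 2) (Δ * l ^ 2)| :=
  J2_bound_general p l m q T K n Δ hl hlm hmq hp hT hΔ hΔ0 hPsi
end

section
/- Let 0 ≤ l ≤ m, p ≥ 1, q ≥ m, T > 0 and n ≥ 3 an integer. Using the bound |Ψ(t)| ≤ 1.0253/(2π|t|) and 1 - 4χ_1 - 1/n > 1/4 for n ≥ 3 (where χ_1 := sup_{x>0} x^{-3}|cos(x)-1+x^2/2| ≈ 0.099), one has (1/T) ∫_l^m |Ψ(u/T)| u^p exp(-(u^2/2)(1 - (4χ_1/q)u - 1/n)) du ≤ (1.0253 · 2^{3p/2-2}/π) (Γ(p/2, l^2/8) - Γ(p/2, m^2/8)). -/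
/-!
For `0 < u ≤ q` the hypothesis on `Ψ` gives `‖Ψ(u/T)‖ ≤ 1.0253 T / (2π u)`, and the elementary
estimate `χ₁ ≤ 5/48` (from `cos x ≤ 1 - x²/2 + x⁴/24` for small `x`, from `cos x ≤ 1` for large
`x`, and from the quadratic bound of `cos` around `π` in between) gives
`1 - 4χ₁u/q - 1/n ≥ 1/4`. Hence the integrand is at most `(1.0253 T / 2π) u^{p-1} e^{-u²/8}`,
and the substitution `v = u²/8` turns the integral of this majorant into
`2^{3p/2-1} (Γ(p/2, l²/8) - Γ(p/2, m²/8))`.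
-/

open MeasureTheory Real Set intervalIntegral

/-- Upper incomplete Gamma function `Γ(a,x) = ∫_x^∞ u^{a-1} e^{-u} du`. -/
noncomputable def uGamma (a x : ℝ) : ℝ := ∫ u in Ioi x, u ^ (a - 1) * Real.exp (-u)

theorem Real.cos_le_one_sub_sq_div_two_add_pow_four_div (x : ℝ) :
    cos x ≤ 1 - x ^ 2 / 2 + x ^ 4 / 24 := by
  let f (t : ℝ) : ℝ := 1 - t ^ 2 / 2 + t ^ 4 / 24 - cos t
  have hderiv (t : ℝ) : deriv f t = sin t - (t - t ^ 3 / 6) := by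
    simp (disch := fun_prop) [f]
    ring
  have hmono : MonotoneOn f (Ici 0) := by
    refine monotoneOn_of_deriv_nonneg (convex_Ici 0) (by fun_prop) (by fun_prop) fun t ht => ?_
    rw [interior_Ici] at ht
    rw [hderiv]
    linarith [sin_ge_sub_cube (le_of_lt ht)]
  have h := hmono self_mem_Ici (abs_nonneg x) (abs_nonneg x)
  simp only [f, cos_abs, cos_zero, sq_abs, Even.pow_abs (by decide : Even 4)] at h
  linarith

theorem abs_cos_sub_one_add_sq_div_two_div_cube_le {x : ℝ} (hx : 0 < x) :
    |cos x - 1 + x ^ 2 / 2| / x ^ 3 ≤ 5 / 48 := by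
  rw [abs_of_nonneg (by linarith [one_sub_sq_div_two_le_cos (x := x)]),
    div_le_iff₀ (by positivity)]
  rcases le_or_gt x (5 / 2) with hsmall | hx₁
  · nlinarith [cos_le_one_sub_sq_div_two_add_pow_four_div x,
      mul_nonneg (pow_nonneg hx.le 3) (sub_nonneg.2 hsmall)]
  rcases le_or_gt (24 / 5) x with hlarge | hx₂
  · nlinarith [cos_le_one x]
  have hc : cos x ≤ -1 + (x - π) ^ 2 / 2 := by
    linarith [one_sub_sq_div_two_le_cos (x := x - π), cos_sub_pi x]
  nlinarith [pi_gt_d6, pi_lt_d2, mul_pos hx hx,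
    mul_nonneg (mul_nonneg (sub_nonneg.2 hx₁.le) (sub_nonneg.2 hx₂.le)) hx.le,
    mul_nonneg (sub_nonneg.2 hx₁.le) (sub_nonneg.2 hx₂.le)]

lemma chi1_le : chi1 ≤ 5 / 48 :=
  have : Nonempty {x : ℝ // 0 < x} := ⟨⟨1, one_pos⟩⟩
  ciSup_le fun x => abs_cos_sub_one_add_sq_div_two_div_cube_le x.2

lemma one_div_four_le_one_sub_four_mul_chi1_sub_inv {q u : ℝ} {n : ℕ} (hu : 0 ≤ u)
    (huq : u ≤ q) (hn : 3 ≤ n) : 1 / 4 ≤ 1 - 4 * chi1 / q * u - 1 / n := by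
  have hchi : 4 * chi1 / q * u ≤ 4 * (5 / 48) := by
    rw [div_mul_eq_mul_div, mul_div_assoc]
    have h1 : u / q ≤ 1 := div_le_one_of_le₀ huq (hu.trans huq)
    have h0 : 0 ≤ u / q := div_nonneg hu (hu.trans huq)
    nlinarith [chi1_le, chi1_nonneg]
  have hn' : (1 : ℝ) / n ≤ 1 / 3 := one_div_le_one_div_of_le (by norm_num) (by exact_mod_cast hn)
  linarith

lemma norm_Psi_div_mul_rpow_mul_exp_le {p q T u : ℝ} {n : ℕ} (hT : 0 < T) (hu : 0 < u)
    (huq : u ≤ q) (hn : 3 ≤ n) (hPsi : ∀ t : ℝ, t ≠ 0 → ‖Psi t‖ ≤ 1.0253 / (2 * π * |t|)) :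
    ‖Psi (u / T)‖ * u ^ p * exp (-(u ^ 2 / 2) * (1 - 4 * chi1 / q * u - 1 / n))
      ≤ 1.0253 * T / (2 * π) * (u ^ (p - 1) * exp (-(u ^ 2 / 8))) := by
  have hPsi_u : ‖Psi (u / T)‖ ≤ 1.0253 * T / (2 * π) / u := by
    refine (hPsi _ (by positivity)).trans_eq ?_
    rw [abs_of_pos (by positivity)]
    field_simp
  have hexp : exp (-(u ^ 2 / 2) * (1 - 4 * chi1 / q * u - 1 / n)) ≤ exp (-(u ^ 2 / 8)) :=
    exp_le_exp.2 <| by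
      nlinarith [one_div_four_le_one_sub_four_mul_chi1_sub_inv hu.le huq hn, sq_nonneg u]
  calc ‖Psi (u / T)‖ * u ^ p * exp (-(u ^ 2 / 2) * (1 - 4 * chi1 / q * u - 1 / n))
      ≤ 1.0253 * T / (2 * π) / u * u ^ p * exp (-(u ^ 2 / 8)) := by gcongr
    _ = 1.0253 * T / (2 * π) * (u ^ (p - 1) * exp (-(u ^ 2 / 8))) := by
      rw [rpow_sub_one hu.ne']
      ring

lemma uGamma_sub_uGamma {a x y : ℝ} (ha : 0 < a) (hx : 0 ≤ x) (hy : 0 ≤ y) :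
    uGamma a x - uGamma a y = ∫ v in x..y, v ^ (a - 1) * exp (-v) := by
  have hint {z : ℝ} (hz : 0 ≤ z) : IntegrableOn (fun v : ℝ => v ^ (a - 1) * exp (-v)) (Ioi z) :=
    ((GammaIntegral_convergent ha).mono_set (Ioi_subset_Ioi hz)).congr_fun
      (fun v _ => mul_comm _ _) measurableSet_Ioi
  exact integral_Ioi_sub_Ioi' (hint hx) (hint hy)

lemma rpow_sub_one_mul_exp_eq {c p u : ℝ} (hc : 0 < c) (hu : 0 < u) :
    u ^ (p - 1) * exp (-(u ^ 2 / c))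
      = c ^ (p / 2) / 2 * ((u ^ 2 / c) ^ (p / 2 - 1) * exp (-(u ^ 2 / c)) * (2 * u / c)) := by
  have hpow : (u ^ 2 / c) ^ (p / 2 - 1) = u ^ (p - 1) / u / (c ^ (p / 2) / c) := by
    rw [div_rpow (by positivity) hc.le, ← rpow_natCast_mul hu.le, rpow_sub_one hc.ne',
      ← rpow_sub_one hu.ne']
    push_cast
    ring_nf
  rw [hpow]
  field_simp

lemma integral_rpow_sub_one_mul_exp_neg_sq_div {c p l m : ℝ} (hc : 0 < c) (hp : 0 < p)
    (hl : 0 ≤ l) (hlm : l ≤ m) :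
    ∫ u in l..m, u ^ (p - 1) * exp (-(u ^ 2 / c))
      = c ^ (p / 2) / 2 * (uGamma (p / 2) (l ^ 2 / c) - uGamma (p / 2) (m ^ 2 / c)) := by
  have hsq (u : ℝ) : HasDerivAt (fun u : ℝ => u ^ 2 / c) (2 * u / c) u := by
    simpa using (hasDerivAt_pow 2 u).div_const c
  rw [uGamma_sub_uGamma (by positivity) (by positivity) (by positivity),
    ← integral_comp_mul_deriv_of_deriv_nonneg (by fun_prop) (fun u _ => hsq u)
      (fun u hu => by rw [min_eq_left hlm] at hu; have := hl.trans hu.1.le; positivity),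
    ← intervalIntegral.integral_const_mul]
  refine integral_congr_ae (ae_of_all _ fun u hu => ?_)
  rw [uIoc_of_le hlm] at hu
  exact rpow_sub_one_mul_exp_eq hc (hl.trans_lt hu.1)

lemma intervalIntegral.integral_mono_of_nonneg_on {f g : ℝ → ℝ} {a b : ℝ} (hab : a ≤ b)
    (hg : IntervalIntegrable g volume a b) (hf : ∀ x ∈ Ioc a b, 0 ≤ f x)
    (hfg : ∀ x ∈ Ioc a b, f x ≤ g x) : ∫ x in a..b, f x ≤ ∫ x in a..b, g x := by
  rw [integral_of_le hab, integral_of_le hab]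
  exact integral_mono_of_nonneg (ae_restrict_of_forall_mem measurableSet_Ioc hf) hg.1
    (ae_restrict_of_forall_mem measurableSet_Ioc hfg)

/-- For `n ≥ 3`,
`T⁻¹ ∫_l^m |Ψ(u/T)| uᵖ exp(-(u²/2)(1 - (4χ₁/q)u - 1/n)) du
  ≤ (1.0253·2^{3p/2-2}/π)(Γ(p/2, l²/8) - Γ(p/2, m²/8))`. -/
theorem J3_bound (p l m q T : ℝ) (n : ℕ)
    (hl : 0 ≤ l) (hlm : l ≤ m) (hmq : m ≤ q) (hp : 1 ≤ p) (hT : 0 < T) (hn : 3 ≤ n)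
    (hPsi : ∀ t : ℝ, t ≠ 0 → ‖Psi t‖ ≤ 1.0253 / (2 * π * |t|)) :
    (1 / T) * ∫ u in l..m, ‖Psi (u / T)‖ * u ^ p *
        Real.exp (-(u ^ 2 / 2) * (1 - 4 * chi1 / q * u - 1 / n))
      ≤ 1.0253 * 2 ^ (3 * p / 2 - 2) / π *
          (uGamma (p / 2) (l ^ 2 / 8) - uGamma (p / 2) (m ^ 2 / 8)) := by
  have hmajorant : IntervalIntegrable (fun u : ℝ => 1.0253 * T / (2 * π) *
      (u ^ (p - 1) * exp (-(u ^ 2 / 8)))) volume l m :=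
    (continuous_const.mul ((continuous_rpow_const (by linarith)).mul
      (by fun_prop))).intervalIntegrable _ _
  have h_eight : (8 : ℝ) ^ (p / 2) = 2 ^ (3 * p / 2 - 2) * 4 := by
    rw [show (8 : ℝ) = 2 ^ (3 : ℝ) by norm_num, ← rpow_mul (by norm_num), rpow_sub (by norm_num)]
    norm_num
    ring_nf
  calc (1 / T) * ∫ u in l..m, ‖Psi (u / T)‖ * u ^ p *
          exp (-(u ^ 2 / 2) * (1 - 4 * chi1 / q * u - 1 / n))
      ≤ (1 / T) * ∫ u in l..m, 1.0253 * T / (2 * π) * (u ^ (p - 1) * exp (-(u ^ 2 / 8))) := by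
        gcongr
        refine integral_mono_of_nonneg_on hlm hmajorant (fun u hu => ?_) fun u hu =>
          norm_Psi_div_mul_rpow_mul_exp_le hT (hl.trans_lt hu.1) (hu.2.trans hmq) hn hPsi
        have := hl.trans_lt hu.1
        positivity
    _ = 1.0253 * 2 ^ (3 * p / 2 - 2) / π *
          (uGamma (p / 2) (l ^ 2 / 8) - uGamma (p / 2) (m ^ 2 / 8)) := by
        rw [intervalIntegral.integral_const_mul,
          integral_rpow_sub_one_mul_exp_neg_sq_div (by norm_num) (by linarith) hl hlm, h_eight]
        field_simp
        ring
end

section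
/- Let λ ∈ ℝ and define G(x) := Φ(x) + (λ/6)(1 - x^2)φ(x) for x ∈ ℝ, where Φ and φ are the standard normal cdf and density. Then the Fourier transform ∫ e^{iux} dG(x) equals (1 - i λ u^3 / 6) e^{-u^2/2} for all real u. -/
open MeasureTheory Real Filter Set

lemma ipow_int (n : ℕ) : Integrable fun x : ℝ => x ^ n * Real.exp (-x ^ 2 / 2) := by
  have h := integrable_rpow_mul_exp_neg_mul_sq (b := 1/2) (by norm_num) (s := (n : ℝ))
    (lt_of_lt_of_le neg_one_lt_zero (Nat.cast_nonneg n))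
  simp_rw [Real.rpow_natCast] at h
  convert h using 2 with x
  ring_nf

lemma tend_pow (n : ℕ) :
    Filter.Tendsto (fun t : ℝ => t ^ n * Real.exp (-t ^ 2 / 2)) atTop (nhds 0) := by
  apply squeeze_zero' (g := fun t : ℝ => t ^ n * Real.exp (-t))
  · filter_upwards [eventually_ge_atTop (0:ℝ)] with t ht
    positivity
  · filter_upwards [eventually_ge_atTop (2:ℝ)] with t ht
    have h1 : -t ^ 2 / 2 ≤ -t := by nlinarith
    have h2 : Real.exp (-t ^ 2 / 2) ≤ Real.exp (-t) := Real.exp_le_exp.mpr h1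
    have h3 : (0:ℝ) ≤ t ^ n := by positivity
    exact mul_le_mul_of_nonneg_left h2 h3
  · exact tendsto_pow_mul_exp_neg_atTop_nhds_zero n

lemma cub_bound (x : ℝ) : ‖(x:ℂ) ^ 3 - 3 * x‖ ≤ 2 + 3 * x ^ 2 + x ^ 4 := by
  have h := norm_sub_le ((x:ℂ) ^ 3) (3 * x)
  have e3 : ‖(x:ℂ) ^ 3‖ = |x| ^ 3 := by
    rw [norm_pow, Complex.norm_real, Real.norm_eq_abs]
  have e1 : ‖(3:ℂ) * x‖ = 3 * |x| := by
    rw [norm_mul, Complex.norm_real, Real.norm_eq_abs]; norm_num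
  have hx3 : |x| ^ 3 ≤ (x ^ 2 + x ^ 4) / 2 := by
    nlinarith [sq_nonneg (|x| * (|x| - 1)), sq_abs x, abs_nonneg x]
  have hx1 : |x| ≤ (1 + x ^ 2) / 2 := by nlinarith [sq_nonneg (|x| - 1), sq_abs x]
  calc ‖(x:ℂ) ^ 3 - 3 * x‖ ≤ |x| ^ 3 + 3 * |x| := by rw [← e3, ← e1]; exact h
    _ ≤ (x ^ 2 + x ^ 4) / 2 + 3 * ((1 + x ^ 2) / 2) := by linarith
    _ ≤ 2 + 3 * x ^ 2 + x ^ 4 := by nlinarith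

set_option maxHeartbeats 1000000 in
/-- The Fourier transform of the generalized density
`g(x) = φ(x)(1 + (λ/6)(x³ - 3x))` of the one-term Edgeworth expansion
`G(x) = Φ(x) + (λ/6)(1-x²)φ(x)` equals `(1 - iλu³/6)e^{-u²/2}`. -/
theorem fourier_edgeworth_density (lam : ℝ) :
    ∀ u : ℝ,
      (∫ x : ℝ, Complex.exp (u * x * Complex.I) *
          ((Real.exp (-x ^ 2 / 2) / Real.sqrt (2 * π)) *
            (1 + lam / 6 * (x ^ 3 - 3 * x))))
        = (1 - Complex.I * lam * u ^ 3 / 6) * Complex.exp (-(u : ℂ) ^ 2 / 2) := by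
  intro u
  set e : ℝ → ℂ := fun x => Complex.exp (u * x * Complex.I) * Complex.exp (-((x:ℂ) * x) / 2)
    with he
  have hnorm : ∀ x : ℝ, ‖e x‖ = Real.exp (-x ^ 2 / 2) := by
    intro x
    have h1 : (-((x:ℂ) * x) / 2) = ((-x ^ 2 / 2 : ℝ) : ℂ) := by push_cast; ring
    have h2 : (u:ℂ) * x * Complex.I = ((u * x : ℝ) : ℂ) * Complex.I := by push_cast; ring
    rw [he]
    simp only [h1, h2, ← Complex.ofReal_exp, norm_mul, Complex.norm_exp_ofReal_mul_I,
      Complex.norm_real, Real.norm_eq_abs, abs_of_pos (Real.exp_pos _), one_mul]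
  have he_cont : Continuous e := by fun_prop
  -- domination helper
  have dom : ∀ (f : ℝ → ℂ), Continuous f → ∀ (c0 c2 c4 : ℝ),
      (∀ x, ‖f x‖ ≤ (c0 + c2 * x ^ 2 + c4 * x ^ 4) * Real.exp (-x ^ 2 / 2)) →
      Integrable f := by
    intro f hf c0 c2 c4 hb
    have hg : Integrable fun x : ℝ =>
        (c0 + c2 * x ^ 2 + c4 * x ^ 4) * Real.exp (-x ^ 2 / 2) := by
      have h := (((ipow_int 0).const_mul c0).add ((ipow_int 2).const_mul c2)).add
        ((ipow_int 4).const_mul c4)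
      refine h.congr (Filter.Eventually.of_forall fun x => ?_)
      simp only [Pi.add_apply]
      ring
    exact hg.mono' hf.aestronglyMeasurable (by filter_upwards with x using hb x)
  -- integrability of e
  have hA : Integrable e := by
    apply dom e he_cont 1 0 0
    intro x
    rw [hnorm]
    nlinarith [Real.exp_pos (-x ^ 2 / 2)]
  -- integrability of e * (x^3 - 3x)
  have hB : Integrable fun x : ℝ => e x * ((x:ℂ) ^ 3 - 3 * x) := by
    apply dom _ (by fun_prop) 2 3 1
    intro x
    rw [norm_mul, hnorm, mul_comm]
    exact mul_le_mul_of_nonneg_right ((cub_bound x).trans (by linarith)) (Real.exp_pos _).le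
  -- integrability of the derivative function
  have hC : Integrable fun x : ℝ => e x * (((x:ℂ) ^ 3 - 3 * x) + Complex.I * u ^ 3) := by
    apply dom _ (by fun_prop) (2 + |u| ^ 3) 3 1
    intro x
    rw [norm_mul, hnorm, mul_comm]
    have h1 : ‖((x:ℂ) ^ 3 - 3 * x) + Complex.I * u ^ 3‖
        ≤ (2 + 3 * x ^ 2 + x ^ 4) + |u| ^ 3 := by
      refine (norm_add_le _ _).trans (add_le_add (cub_bound x) ?_)
      rw [norm_mul, Complex.norm_I, one_mul]
      rw [show ((u:ℂ) ^ 3) = (((u ^ 3 : ℝ)) : ℂ) by push_cast; ring,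
        Complex.norm_real, Real.norm_eq_abs, abs_pow]
    refine mul_le_mul_of_nonneg_right (h1.trans (by ring_nf; rfl)) (Real.exp_pos _).le
  -- The antiderivative F
  set p : ℝ → ℂ := fun x => -((x:ℂ) * x) - Complex.I * u * x + u ^ 2 + 1 with hp
  set F : ℝ → ℂ := fun x => e x * p x with hF
  have hderiv : ∀ x : ℝ, HasDerivAt F (e x * (((x:ℂ) ^ 3 - 3 * x) + Complex.I * u ^ 3)) x := by
    intro x
    have h1 : HasDerivAt (fun y : ℝ => Complex.exp (u * y * Complex.I))
        (Complex.exp (u * x * Complex.I) * ((u:ℂ) * Complex.I)) x := by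
      have hi : HasDerivAt (fun y : ℝ => (u:ℂ) * y * Complex.I) ((u:ℂ) * Complex.I) x := by
        have := (((hasDerivAt_id x).ofReal_comp).const_mul (u:ℂ)).mul_const Complex.I
        simpa using this
      simpa using hi.cexp
    have hid : HasDerivAt (fun y : ℝ => (y:ℂ)) 1 x := by
      simpa using (hasDerivAt_id x).ofReal_comp
    have h2 : HasDerivAt (fun y : ℝ => Complex.exp (-((y:ℂ) * y) / 2))
        (Complex.exp (-((x:ℂ) * x) / 2) * (-(x:ℂ))) x := by
      have hi : HasDerivAt (fun y : ℝ => -((y:ℂ) * y) / 2) (-(x:ℂ)) x := by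
        have := ((hid.mul hid).neg).div_const (2:ℂ)
        exact this.congr_deriv (by ring)
      simpa using hi.cexp
    have h3 : HasDerivAt p (-2 * (x:ℂ) - Complex.I * u) x := by
      have hx2 : HasDerivAt (fun y : ℝ => ((y:ℂ) * y)) (2 * (x:ℂ)) x := by
        have := hid.mul hid
        exact this.congr_deriv (by ring)
      have hx1 : HasDerivAt (fun y : ℝ => Complex.I * u * (y:ℂ)) (Complex.I * u) x := by
        have := hid.const_mul (Complex.I * u)
        simpa using this
      have := ((hx2.neg.sub hx1).add_const ((u:ℂ) ^ 2)).add_const 1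
      exact this.congr_deriv (by ring)
    have := ((h1.mul h2).mul h3)
    refine this.congr_deriv ?_
    rw [he, hp]
    simp only [Complex.I_sq, Pi.mul_apply]
    ring_nf
    simp only [Complex.I_sq]
    ring
  -- F tends to 0 at ±∞
  have hFnorm : ∀ x : ℝ, ‖F x‖ ≤ (x ^ 2 + |u| * |x| + (u ^ 2 + 1)) * Real.exp (-x ^ 2 / 2) := by
    intro x
    rw [hF, norm_mul, hnorm, mul_comm]
    refine mul_le_mul_of_nonneg_right ?_ (Real.exp_pos _).le
    rw [hp]
    have step1 : ‖-((x:ℂ) * x) - Complex.I * u * x + u ^ 2 + 1‖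
        ≤ ‖-((x:ℂ) * x)‖ + ‖Complex.I * u * x‖ + ‖((u:ℂ)) ^ 2‖ + ‖(1:ℂ)‖ := by
      calc ‖-((x:ℂ) * x) - Complex.I * u * x + u ^ 2 + 1‖
          ≤ ‖-((x:ℂ) * x) - Complex.I * u * x + u ^ 2‖ + ‖(1:ℂ)‖ := norm_add_le _ _
        _ ≤ (‖-((x:ℂ) * x) - Complex.I * u * x‖ + ‖((u:ℂ)) ^ 2‖) + ‖(1:ℂ)‖ := by
            gcongr; exact norm_add_le _ _
        _ ≤ (‖-((x:ℂ) * x)‖ + ‖Complex.I * u * x‖) + ‖((u:ℂ)) ^ 2‖ + ‖(1:ℂ)‖ := by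
            gcongr; exact norm_sub_le _ _
    refine step1.trans (le_of_eq ?_)
    rw [norm_neg, norm_mul, norm_mul, norm_mul, Complex.norm_I, one_mul, norm_pow, norm_one]
    simp only [Complex.norm_real, Real.norm_eq_abs, sq_abs]
    nlinarith [sq_abs x, abs_nonneg x]
  have hbound_tend : Filter.Tendsto
      (fun t : ℝ => (t ^ 2 + |u| * t + (u ^ 2 + 1)) * Real.exp (-t ^ 2 / 2)) atTop (nhds 0) := by
    have h := ((tend_pow 2).add (Filter.Tendsto.const_mul |u| (tend_pow 1))).add
      (Filter.Tendsto.const_mul (u ^ 2 + 1) (tend_pow 0))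
    simp only [add_zero, mul_zero] at h
    convert h using 2 with t
    ring
  have hFtop : Filter.Tendsto F atTop (nhds 0) := by
    rw [tendsto_zero_iff_norm_tendsto_zero]
    apply squeeze_zero' (Filter.Eventually.of_forall fun x => norm_nonneg _) ?_ hbound_tend
    filter_upwards [eventually_ge_atTop (0:ℝ)] with x hx
    refine (hFnorm x).trans (le_of_eq ?_)
    rw [abs_of_nonneg hx]
  have hFbot : Filter.Tendsto F atBot (nhds 0) := by
    rw [tendsto_zero_iff_norm_tendsto_zero]
    have hcomp : Filter.Tendsto
        (fun x : ℝ => (|x| ^ 2 + |u| * |x| + (u ^ 2 + 1)) * Real.exp (-|x| ^ 2 / 2))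
        atBot (nhds 0) := hbound_tend.comp tendsto_abs_atBot_atTop
    apply squeeze_zero (fun x => norm_nonneg _) (fun x => ?_) hcomp
    refine (hFnorm x).trans (le_of_eq ?_)
    rw [sq_abs]
  -- integral of derivative over ℝ is 0
  have hzero : (∫ x : ℝ, e x * (((x:ℂ) ^ 3 - 3 * x) + Complex.I * u ^ 3)) = 0 := by
    rw [← intervalIntegral.integral_Iic_add_Ioi (b := (0:ℝ)) hC.integrableOn hC.integrableOn]
    rw [integral_Iic_of_hasDerivAt_of_tendsto' (fun x _ => hderiv x) hC.integrableOn hFbot,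
      integral_Ioi_of_hasDerivAt_of_tendsto' (fun x _ => hderiv x) hC.integrableOn hFtop]
    ring
  -- value of the Gaussian integral
  have hI0 : (∫ x : ℝ, e x) = (Real.sqrt (2 * π) : ℂ) * Complex.exp (-(u:ℂ) ^ 2 / 2) := by
    have h := fourierIntegral_gaussian (b := (1/2 : ℂ)) (by norm_num) ((u : ℂ))
    have heq : ∀ x : ℝ, e x
        = Complex.exp (Complex.I * u * x) * Complex.exp (-(1/2 : ℂ) * x ^ 2) := by
      intro x; simp only [he]; congr 1 <;> push_cast <;> ring
    rw [integral_congr_ae (Filter.Eventually.of_forall heq), h]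
    congr 1
    · rw [show ((π : ℂ) / (1/2)) = ((2 * π : ℝ) : ℂ) by push_cast; ring]
      rw [show ((1:ℂ)/2) = (((1/2:ℝ)):ℂ) by norm_num,
        ← Complex.ofReal_cpow (by positivity), Real.sqrt_eq_rpow]
    · congr 1
      ring
  -- value of I1
  have hI1 : (∫ x : ℝ, e x * ((x:ℂ) ^ 3 - 3 * x))
      = -(Complex.I * u ^ 3) * ((Real.sqrt (2 * π) : ℂ) * Complex.exp (-(u:ℂ) ^ 2 / 2)) := by
    have hsplit : (∫ x : ℝ, e x * (((x:ℂ) ^ 3 - 3 * x) + Complex.I * u ^ 3))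
        = (∫ x : ℝ, e x * ((x:ℂ) ^ 3 - 3 * x)) + (Complex.I * u ^ 3) * ∫ x : ℝ, e x := by
      rw [← integral_const_mul]
      rw [← integral_add hB (hA.const_mul _)]
      congr 1; funext x; ring
    rw [hzero] at hsplit
    rw [← hI0]
    linear_combination -hsplit
  -- assemble
  have hs : ((Real.sqrt (2 * π) : ℂ)) ≠ 0 := by
    simp only [ne_eq, Complex.ofReal_eq_zero]
    positivity
  have hrw : ∀ x : ℝ, Complex.exp (u * x * Complex.I) *
      ((Real.exp (-x ^ 2 / 2) / Real.sqrt (2 * π)) *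
        (1 + (lam : ℂ) / 6 * ((x:ℂ) ^ 3 - 3 * x)))
      = ((Real.sqrt (2 * π) : ℂ))⁻¹ * (e x + (lam : ℂ) / 6 * (e x * ((x:ℂ) ^ 3 - 3 * x))) := by
    intro x
    have hex : ((Real.exp (-x ^ 2 / 2) : ℝ) : ℂ) = Complex.exp (-((x:ℂ) * x) / 2) := by
      rw [Complex.ofReal_exp]
      congr 1
      push_cast
      ring
    simp only [he]
    rw [hex]
    field_simp
  calc (∫ x : ℝ, Complex.exp (u * x * Complex.I) *
          ((Real.exp (-x ^ 2 / 2) / Real.sqrt (2 * π)) *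
            (1 + (lam:ℂ) / 6 * ((x:ℂ) ^ 3 - 3 * x))))
      = ∫ x : ℝ, ((Real.sqrt (2 * π) : ℂ))⁻¹ *
          (e x + (lam : ℂ) / 6 * (e x * ((x:ℂ) ^ 3 - 3 * x))) := by
        exact integral_congr_ae (Filter.Eventually.of_forall hrw)
    _ = ((Real.sqrt (2 * π) : ℂ))⁻¹ *
          ((∫ x : ℝ, e x) + (lam : ℂ) / 6 * ∫ x : ℝ, e x * ((x:ℂ) ^ 3 - 3 * x)) := by
        rw [integral_const_mul, ← integral_const_mul ((lam:ℂ)/6),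
          ← integral_add hA (hB.const_mul _)]
    _ = (1 - Complex.I * lam * u ^ 3 / 6) * Complex.exp (-(u : ℂ) ^ 2 / 2) := by
        rw [hI0, hI1]
        linear_combination (Complex.exp (-(u:ℂ) ^ 2 / 2) * (1 - Complex.I * lam * u ^ 3 / 6)) *
          inv_mul_cancel₀ hs
end
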